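/- Let Ξ ⊂ L·ℤ² with L sufficiently large, and let (g_i)_{ξ_i ∈ Ξ} be nonnegative reals. Then ∑_{j ∈ Ξ} ( ∑_{i ∈ Ξ, i ≠ j} g_i·θ(ξ_i − ξ_j) )² ≤ C·L^{-3}·∑_{i,k ∈ Ξ} g_i·g_k·θ(ξ_i − ξ_k) ≤ C'·L^{-3}·∑_{i ∈ Ξ} g_i², where θ(z) = (1+|z|)^{-3} and C, C' are independent of L and Ξ. -/

import Mathlib

noncomputable def theta (z : EuclideanSpace ℝ (Fin 2)) : ℝ := ((1 + ‖z‖) ^ 3)⁻¹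

noncomputable def latt (n : ℤ × ℤ) : EuclideanSpace ℝ (Fin 2) :=
  (WithLp.equiv 2 (Fin 2 → ℝ)).symm ![(n.1 : ℝ), (n.2 : ℝ)]

/-!
Expanding the square, `∑ⱼ (∑_{i ≠ j} gᵢ θᵢⱼ)² = ∑_{i,k} gᵢ gₖ ∑ⱼ θᵢⱼ θₖⱼ` with `j ≠ i, k`. The
pointwise bound `θᵢⱼ θₖⱼ ≤ 8 θᵢₖ (θᵢⱼ + θₖⱼ)` and the off-diagonal row bound
`∑_{j ≠ i} θ(L ξᵢ - L ξⱼ) ≤ ∑_{n ≠ 0} θ(L n) ≤ K L⁻³`, with `K = ∑_{n ≠ 0} |n|⁻³`, bound the inner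
sum by `16 K L⁻³ θᵢₖ`. The second inequality is Schur's test: for `L³ ≥ K` every row of the full
kernel sums to at most `1 + K L⁻³ ≤ 2`. All sums are taken in `ℝ≥0∞`, where no summability is
needed, and transferred to `ℝ` at the end.
-/

open scoped ENNReal

namespace ENNReal

variable {ι : Type*}

theorem toReal_tsum_ofReal {r : ι → ℝ} (hr : ∀ i, 0 ≤ r i) :
    (∑' i, ENNReal.ofReal (r i)).toReal = ∑' i, r i := by
  rw [tsum_toReal_eq fun _ => ofReal_ne_top]
  exact tsum_congr fun i => toReal_ofReal (hr i)

theorem toReal_tsum_of_ne_top {f : ι → ℝ≥0∞} (hf : ∑' i, f i ≠ ∞) :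
    (∑' i, f i).toReal = ∑' i, (f i).toReal :=
  tsum_toReal_eq fun i => ne_top_of_le_ne_top hf (ENNReal.le_tsum i)

theorem toReal_tsum_sq_tsum_ofReal {r : ι → ι → ℝ} (hr : ∀ i j, 0 ≤ r i j)
    (h : ∑' j, (∑' i, ENNReal.ofReal (r i j)) ^ 2 ≠ ∞) :
    (∑' j, (∑' i, ENNReal.ofReal (r i j)) ^ 2).toReal = ∑' j, (∑' i, r i j) ^ 2 := by
  rw [toReal_tsum_of_ne_top h]
  exact tsum_congr fun j => by rw [toReal_pow, toReal_tsum_ofReal fun i => hr i j]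

theorem toReal_tsum_tsum_ofReal {a : ι → ι → ℝ} (ha : ∀ i k, 0 ≤ a i k)
    (h : ∑' i, ∑' k, ENNReal.ofReal (a i k) ≠ ∞) :
    (∑' i, ∑' k, ENNReal.ofReal (a i k)).toReal = ∑' i, ∑' k, a i k := by
  rw [toReal_tsum_of_ne_top h]
  exact tsum_congr fun i => toReal_tsum_ofReal (ha i)

theorem mul_le_sq_add_sq (a b : ℝ≥0∞) : a * b ≤ a ^ 2 + b ^ 2 := by
  rcases le_total a b with h | h
  · calc a * b ≤ b ^ 2 := by rw [sq]; gcongr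
      _ ≤ a ^ 2 + b ^ 2 := le_add_self
  · calc a * b ≤ a ^ 2 := by rw [sq]; gcongr
      _ ≤ a ^ 2 + b ^ 2 := le_self_add

theorem tsum_tsum_mul_mul_le (f : ι → ℝ≥0∞) (u : ι → ι → ℝ≥0∞) {R : ℝ≥0∞}
    (hrow : ∀ i, ∑' k, u i k ≤ R) (hcol : ∀ k, ∑' i, u i k ≤ R) :
    ∑' i, ∑' k, f i * f k * u i k ≤ 2 * R * ∑' i, f i ^ 2 := by
  have hweighted : ∀ (v : ι → ι → ℝ≥0∞), (∀ i, ∑' k, v i k ≤ R) →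
      ∑' i, ∑' k, f i ^ 2 * v i k ≤ R * ∑' i, f i ^ 2 := fun v hv => by
    rw [← ENNReal.tsum_mul_left]
    gcongr with i
    rw [ENNReal.tsum_mul_left, mul_comm]
    gcongr
    exact hv i
  calc ∑' i, ∑' k, f i * f k * u i k
      ≤ ∑' i, ∑' k, (f i ^ 2 * u i k + f k ^ 2 * u i k) := by
        gcongr with i k
        rw [← add_mul]
        gcongr
        exact mul_le_sq_add_sq _ _
    _ = ∑' i, ∑' k, f i ^ 2 * u i k + ∑' k, ∑' i, f k ^ 2 * u i k := by
        simp_rw [ENNReal.tsum_add]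
        rw [ENNReal.tsum_comm (f := fun i k => f k ^ 2 * u i k)]
    _ ≤ R * ∑' i, f i ^ 2 + R * ∑' i, f i ^ 2 :=
        add_le_add (hweighted u hrow) (hweighted (fun k i => u i k) hcol)
    _ = 2 * R * ∑' i, f i ^ 2 := by ring

theorem tsum_sq_tsum_mul_le (f : ι → ℝ≥0∞) (t u : ι → ι → ℝ≥0∞) {c B : ℝ≥0∞}
    (htu : ∀ i k j, t i j * t k j ≤ c * u i k * (t i j + t k j))
    (hrow : ∀ i, ∑' j, t i j ≤ B) :
    ∑' j, (∑' i, f i * t i j) ^ 2 ≤ 2 * c * B * ∑' i, ∑' k, f i * f k * u i k := by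
  have hpair : ∀ i k, ∑' j, f i * t i j * (f k * t k j) ≤ 2 * c * B * (f i * f k * u i k) := by
    intro i k
    calc ∑' j, f i * t i j * (f k * t k j)
        ≤ ∑' j, c * (f i * f k * u i k) * (t i j + t k j) :=
          ENNReal.tsum_le_tsum fun j => by
            calc f i * t i j * (f k * t k j) = f i * f k * (t i j * t k j) := by ring
              _ ≤ f i * f k * (c * u i k * (t i j + t k j)) := mul_le_mul_right (htu i k j) _
              _ = c * (f i * f k * u i k) * (t i j + t k j) := by ring
      _ = c * (f i * f k * u i k) * (∑' j, t i j + ∑' j, t k j) := by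
          rw [ENNReal.tsum_mul_left, ENNReal.tsum_add]
      _ ≤ c * (f i * f k * u i k) * (B + B) := by gcongr <;> apply hrow
      _ = 2 * c * B * (f i * f k * u i k) := by ring
  calc ∑' j, (∑' i, f i * t i j) ^ 2
      = ∑' j, ∑' i, ∑' k, f i * t i j * (f k * t k j) := by
        simp_rw [sq, ← ENNReal.tsum_mul_right, ← ENNReal.tsum_mul_left]
    _ = ∑' i, ∑' k, ∑' j, f i * t i j * (f k * t k j) := by
        rw [ENNReal.tsum_comm]
        exact tsum_congr fun i => ENNReal.tsum_comm
    _ ≤ ∑' i, ∑' k, 2 * c * B * (f i * f k * u i k) := by gcongr with i k; exact hpair i k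
    _ = 2 * c * B * ∑' i, ∑' k, f i * f k * u i k := by simp_rw [ENNReal.tsum_mul_left]

end ENNReal

section Theta

variable {x y z : EuclideanSpace ℝ (Fin 2)}

theorem theta_nonneg (z : EuclideanSpace ℝ (Fin 2)) : 0 ≤ theta z := by
  unfold theta; positivity

@[simp] theorem theta_zero : theta 0 = 1 := by simp [theta]

theorem theta_sub_comm (x y : EuclideanSpace ℝ (Fin 2)) : theta (x - y) = theta (y - x) := by
  rw [theta, theta, norm_sub_rev]

theorem theta_le_inv_norm_pow (hz : z ≠ 0) : theta z ≤ (‖z‖ ^ 3)⁻¹ := by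
  have := norm_pos_iff.mpr hz
  unfold theta
  gcongr
  linarith

theorem theta_le_eight_mul_theta (h : ‖x‖ ≤ 2 * ‖y‖ + 1) : theta y ≤ 8 * theta x := by
  unfold theta
  calc ((1 + ‖y‖) ^ 3)⁻¹ = 8 * ((2 * (1 + ‖y‖)) ^ 3)⁻¹ := by rw [mul_pow, mul_inv]; ring
    _ ≤ 8 * ((1 + ‖x‖) ^ 3)⁻¹ := by gcongr; linarith

-- If `z` is the one of `x, z` farther from `y`, then `‖x - z‖ ≤ 2 ‖z - y‖`,
-- so `θ (z - y) ≤ 8 θ (x - z)`.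
theorem theta_sub_mul_theta_sub_le (x y z : EuclideanSpace ℝ (Fin 2)) :
    theta (x - y) * theta (z - y) ≤ 8 * theta (x - z) * (theta (x - y) + theta (z - y)) := by
  wlog h : ‖x - y‖ ≤ ‖z - y‖ generalizing x z
  · have := this z x (by linarith)
    rw [theta_sub_comm z x] at this
    linarith
  have hxz : ‖x - z‖ ≤ 2 * ‖z - y‖ + 1 := by
    have := norm_sub_le_norm_sub_add_norm_sub x y z
    rw [norm_sub_rev y z] at this
    linarith
  calc theta (x - y) * theta (z - y) ≤ theta (x - y) * (8 * theta (x - z)) :=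
        mul_le_mul_of_nonneg_left (theta_le_eight_mul_theta hxz) (theta_nonneg _)
    _ ≤ 8 * theta (x - z) * (theta (x - y) + theta (z - y)) := by
        nlinarith [theta_nonneg (x - y), theta_nonneg (z - y), theta_nonneg (x - z)]

end Theta

section Lattice

@[simp] theorem latt_zero : latt 0 = 0 := by
  ext i
  fin_cases i <;> simp [latt]

theorem latt_sub (m n : ℤ × ℤ) : latt m - latt n = latt (m - n) := by
  ext i
  fin_cases i <;> simp [latt]

theorem norm_finTwoArrow_symm_le_norm_latt (n : ℤ × ℤ) :
    ‖(LinearEquiv.finTwoArrow ℤ ℤ).symm n‖ ≤ ‖latt n‖ := by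
  refine pi_norm_le_iff_of_nonneg (norm_nonneg _) |>.mpr fun i => ?_
  calc ‖(LinearEquiv.finTwoArrow ℤ ℤ).symm n i‖ = ‖latt n i‖ := by
        fin_cases i <;> simp [latt, Int.norm_eq_abs]
    _ ≤ ‖latt n‖ := PiLp.norm_apply_le _ _

theorem latt_ne_zero {n : ℤ × ℤ} (hn : n ≠ 0) : latt n ≠ 0 :=
  norm_pos_iff.mp <|
    (norm_pos_iff.mpr ((LinearEquiv.finTwoArrow ℤ ℤ).symm.map_ne_zero_iff.mpr hn)).trans_le
      (norm_finTwoArrow_symm_le_norm_latt n)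

theorem summable_inv_norm_latt_pow_three : Summable fun n : ℤ × ℤ => (‖latt n‖ ^ 3)⁻¹ := by
  refine ((EisensteinSeries.summable_one_div_norm_rpow (k := 3) (by norm_num)).comp_injective
    (LinearEquiv.finTwoArrow ℤ ℤ).symm.injective).of_nonneg_of_le (fun _ => by positivity)
    fun n => ?_
  rcases eq_or_ne n 0 with rfl | hn
  · simp
  have hpos : 0 < ‖(LinearEquiv.finTwoArrow ℤ ℤ).symm n‖ :=
    norm_pos_iff.mpr ((LinearEquiv.finTwoArrow ℤ ℤ).symm.map_ne_zero_iff.mpr hn)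
  rw [Function.comp_apply, Real.rpow_neg hpos.le, Real.rpow_ofNat]
  gcongr
  exact norm_finTwoArrow_symm_le_norm_latt n

-- The `n = 0` term of the sum is `0⁻¹ = 0`.
noncomputable def lattInvCubeSum : ℝ := ∑' n : ℤ × ℤ, (‖latt n‖ ^ 3)⁻¹

theorem lattInvCubeSum_pos : 0 < lattInvCubeSum :=
  summable_inv_norm_latt_pow_three.tsum_pos (fun _ => by positivity) (1, 0)
    (by have := latt_ne_zero (n := (1, 0)) (by simp); positivity)

theorem tsum_ofReal_theta_smul_latt_le {L : ℝ} (hL : 0 < L) :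
    ∑' n : ℤ × ℤ, ENNReal.ofReal (if n ≠ 0 then theta (L • latt n) else 0) ≤
      ENNReal.ofReal (lattInvCubeSum / L ^ 3) := by
  have hle : ∀ n : ℤ × ℤ,
      (if n ≠ 0 then theta (L • latt n) else 0) ≤ (L ^ 3)⁻¹ * (‖latt n‖ ^ 3)⁻¹ := by
    intro n
    split_ifs with hn
    · calc theta (L • latt n) ≤ (‖L • latt n‖ ^ 3)⁻¹ :=
            theta_le_inv_norm_pow (smul_ne_zero hL.ne' (latt_ne_zero hn))
        _ = (L ^ 3)⁻¹ * (‖latt n‖ ^ 3)⁻¹ := by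
            rw [norm_smul, Real.norm_of_nonneg hL.le, mul_pow, mul_inv]
    · positivity
  calc ∑' n : ℤ × ℤ, ENNReal.ofReal (if n ≠ 0 then theta (L • latt n) else 0)
      ≤ ∑' n : ℤ × ℤ, ENNReal.ofReal ((L ^ 3)⁻¹ * (‖latt n‖ ^ 3)⁻¹) :=
        ENNReal.tsum_le_tsum fun n => ENNReal.ofReal_le_ofReal (hle n)
    _ = ENNReal.ofReal (lattInvCubeSum / L ^ 3) := by
        rw [← ENNReal.ofReal_tsum_of_nonneg (fun _ => by positivity)
          (summable_inv_norm_latt_pow_three.mul_left _), tsum_mul_left, lattInvCubeSum,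
          div_eq_inv_mul]

end Lattice

section Kernel

variable {L : ℝ} (Ξ : Set (ℤ × ℤ))

theorem tsum_ofReal_offDiag_theta_le (hL : 0 < L) (i : Ξ) :
    ∑' j : Ξ, ENNReal.ofReal (if (i : ℤ × ℤ) ≠ j then theta (L • latt i - L • latt j) else 0) ≤
      ENNReal.ofReal (lattInvCubeSum / L ^ 3) := by
  have hinj : Function.Injective fun j : Ξ => (i : ℤ × ℤ) - j :=
    sub_right_injective.comp Subtype.val_injective
  calc _ = ∑' j : Ξ, (fun n : ℤ × ℤ => ENNReal.ofReal
          (if n ≠ 0 then theta (L • latt n) else 0)) ((i : ℤ × ℤ) - j) := by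
        simp_rw [← smul_sub, latt_sub, sub_ne_zero]
    _ ≤ _ := ENNReal.tsum_comp_le_tsum_of_injective hinj _
    _ ≤ _ := tsum_ofReal_theta_smul_latt_le hL

theorem tsum_ofReal_theta_le (hL : 0 < L) (i : Ξ) :
    ∑' k : Ξ, ENNReal.ofReal (theta (L • latt i - L • latt k)) ≤
      1 + ENNReal.ofReal (lattInvCubeSum / L ^ 3) := by
  have hsplit : ∀ k : Ξ, ENNReal.ofReal (theta (L • latt i - L • latt k)) =
      (if k = i then 1 else 0) +
        ENNReal.ofReal (if (i : ℤ × ℤ) ≠ k then theta (L • latt i - L • latt k) else 0) := by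
    intro k
    by_cases hki : k = i
    · simp [hki]
    · simp [hki, Subtype.coe_ne_coe.mpr (Ne.symm hki)]
  rw [tsum_congr hsplit, ENNReal.tsum_add, tsum_ite_eq]
  gcongr
  exact tsum_ofReal_offDiag_theta_le Ξ hL i

theorem ofReal_offDiag_theta_mul_le (i k j : Ξ) :
    ENNReal.ofReal (if (i : ℤ × ℤ) ≠ j then theta (L • latt i - L • latt j) else 0) *
        ENNReal.ofReal (if (k : ℤ × ℤ) ≠ j then theta (L • latt k - L • latt j) else 0) ≤
      8 * ENNReal.ofReal (theta (L • latt i - L • latt k)) *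
        (ENNReal.ofReal (if (i : ℤ × ℤ) ≠ j then theta (L • latt i - L • latt j) else 0) +
          ENNReal.ofReal (if (k : ℤ × ℤ) ≠ j then theta (L • latt k - L • latt j) else 0)) := by
  split_ifs
  · rw [← ENNReal.ofReal_mul (theta_nonneg _), ← ENNReal.ofReal_add (theta_nonneg _)
      (theta_nonneg _), ← ENNReal.ofReal_ofNat 8, ← ENNReal.ofReal_mul (by norm_num),
      ← ENNReal.ofReal_mul (by have := theta_nonneg (L • latt i - L • latt k); positivity)]
    exact ENNReal.ofReal_le_ofReal (theta_sub_mul_theta_sub_le _ _ _)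
  all_goals simp

theorem tsum_sq_tsum_offDiag_le (hL : 0 < L) {g : ℤ × ℤ → ℝ} (hg : ∀ i, 0 ≤ g i) :
    ∑' j : Ξ, (∑' i : Ξ, ENNReal.ofReal (if (i : ℤ × ℤ) ≠ j then
        g i * theta (L • latt i - L • latt j) else 0)) ^ 2 ≤
      ENNReal.ofReal (16 * lattInvCubeSum / L ^ 3) * ∑' i : Ξ, ∑' k : Ξ,
        ENNReal.ofReal (g i * g k * theta (L • latt i - L • latt k)) := by
  have hterm : ∀ i j : Ξ, ENNReal.ofReal (if (i : ℤ × ℤ) ≠ j then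
      g i * theta (L • latt i - L • latt j) else 0) = ENNReal.ofReal (g i) *
        ENNReal.ofReal (if (i : ℤ × ℤ) ≠ j then theta (L • latt i - L • latt j) else 0) :=
    fun i j => by rw [← ENNReal.ofReal_mul (hg i), mul_ite, mul_zero]
  simp_rw [hterm, ENNReal.ofReal_mul (mul_nonneg (hg _) (hg _)),
    ENNReal.ofReal_mul (hg _), mul_div_assoc, ENNReal.ofReal_mul (by norm_num : (0 : ℝ) ≤ 16)]
  calc _ ≤ 2 * 8 * ENNReal.ofReal (lattInvCubeSum / L ^ 3) * _ :=
        ENNReal.tsum_sq_tsum_mul_le (fun i : Ξ => ENNReal.ofReal (g i)) _ _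
          (ofReal_offDiag_theta_mul_le Ξ) (tsum_ofReal_offDiag_theta_le Ξ hL)
    _ = _ := by norm_num

theorem tsum_tsum_ofReal_mul_theta_le (hL : 0 < L) (hLK : lattInvCubeSum / L ^ 3 ≤ 1)
    {g : ℤ × ℤ → ℝ} (hg : ∀ i, 0 ≤ g i) :
    ∑' i : Ξ, ∑' k : Ξ, ENNReal.ofReal (g i * g k * theta (L • latt i - L • latt k)) ≤
      4 * ∑' i : Ξ, ENNReal.ofReal (g i ^ 2) := by
  have hrow : ∀ i : Ξ, ∑' k : Ξ, ENNReal.ofReal (theta (L • latt i - L • latt k)) ≤ 2 :=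
    fun i => (tsum_ofReal_theta_le Ξ hL i).trans <| by
      rw [← one_add_one_eq_two]; gcongr; exact ENNReal.ofReal_le_one.mpr hLK
  simp_rw [ENNReal.ofReal_mul (mul_nonneg (hg _) (hg _)), ENNReal.ofReal_mul (hg _),
    ENNReal.ofReal_pow (hg _)]
  calc _ ≤ 2 * 2 * _ := ENNReal.tsum_tsum_mul_mul_le (fun i : Ξ => ENNReal.ofReal (g i)) _ hrow
        fun k => by simp_rw [theta_sub_comm _ (L • latt (k : ℤ × ℤ))]; exact hrow k
    _ = _ := by norm_num

end Kernel

theorem lattice_offdiagonal_square_sum_bound :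
    ∃ C > (0 : ℝ), ∃ C' > (0 : ℝ), ∃ L₀ > (0 : ℝ), ∀ L ≥ L₀,
      ∀ (Ξ : Set (ℤ × ℤ)) (g : ℤ × ℤ → ℝ),
        (∀ i, 0 ≤ g i) → Summable (fun i : Ξ => (g i) ^ 2) →
        (∑' j : Ξ, (∑' i : Ξ, if (i : ℤ × ℤ) ≠ (j : ℤ × ℤ) then
              g i * theta (L • latt i - L • latt j) else 0) ^ 2) ≤
            C / L ^ 3 * ∑' i : Ξ, ∑' k : Ξ,
              g i * g k * theta (L • latt i - L • latt k) ∧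
          C / L ^ 3 * (∑' i : Ξ, ∑' k : Ξ,
              g i * g k * theta (L • latt i - L • latt k)) ≤
            C' / L ^ 3 * ∑' i : Ξ, (g i) ^ 2 := by
  have hK := lattInvCubeSum_pos
  refine ⟨16 * lattInvCubeSum, by positivity, 64 * lattInvCubeSum, by positivity,
    1 + lattInvCubeSum, by positivity, fun L hL Ξ g hg hg2 => ?_⟩
  have hL0 : 0 < L := by linarith
  have hLK : lattInvCubeSum / L ^ 3 ≤ 1 := by
    rw [div_le_one (by positivity)]
    linarith [le_self_pow₀ (by linarith : 1 ≤ L) (by norm_num : 3 ≠ 0)]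
  have hM := tsum_tsum_ofReal_mul_theta_le Ξ hL0 hLK hg
  have hS := tsum_sq_tsum_offDiag_le Ξ hL0 hg
  have hQfin : 4 * ∑' i : Ξ, ENNReal.ofReal (g i ^ 2) ≠ ⊤ :=
    ENNReal.mul_ne_top ENNReal.ofNat_ne_top hg2.tsum_ofReal_ne_top
  have hMfin := ne_top_of_le_ne_top hQfin hM
  have hSfin := ne_top_of_le_ne_top (ENNReal.mul_ne_top ENNReal.ofReal_ne_top hMfin) hS
  rw [← ENNReal.toReal_tsum_sq_tsum_ofReal (fun i j => by
      split_ifs; exacts [mul_nonneg (hg _) (theta_nonneg _), le_rfl]) hSfin,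
    ← ENNReal.toReal_tsum_tsum_ofReal
      (fun i k => mul_nonneg (mul_nonneg (hg _) (hg _)) (theta_nonneg _)) hMfin,
    ← ENNReal.toReal_tsum_ofReal fun i => sq_nonneg _]
  constructor
  · calc _ ≤ _ := ENNReal.toReal_mono (ENNReal.mul_ne_top ENNReal.ofReal_ne_top hMfin) hS
      _ = _ := by rw [ENNReal.toReal_mul, ENNReal.toReal_ofReal (by positivity)]
  · calc _ ≤ 16 * lattInvCubeSum / L ^ 3 * (4 * ∑' i : Ξ, ENNReal.ofReal (g i ^ 2)).toReal :=
          mul_le_mul_of_nonneg_left (ENNReal.toReal_mono hQfin hM) (by positivity)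
      _ = _ := by rw [ENNReal.toReal_mul, ENNReal.toReal_ofNat]; ring
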